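/- arXiv:2411.13300 — 2 statements merged into one kernel-verified Lean document; each statement's English description precedes it below -/
import Mathlib

section
/- Let S ⊆ ℝ^{n−1} be connected and let P ∈ ℝ[x₁,…,x_{n−1};x_n] have degree d_n in x_n, with leading coefficient c_{d_n}(x) (the coefficient of x_n^{d_n}). If c_{d_n} vanishes identically on S and P is projectively delineable on S, then P is delineable on S. -/
noncomputable section

open Polynomial Finset

/-- The real projective line `ℝP¹`: the quotient of `ℝ² ∖ {0}` by proportionality. -/
abbrev RP1 : Type := Projectivization ℝ (Fin 2 → ℝ)

/-- The quotient topology on the real projective line. -/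
instance : TopologicalSpace RP1 :=
  inferInstanceAs (TopologicalSpace (Quotient (projectivizationSetoid ℝ (Fin 2 → ℝ))))

/-- Homogenization of a univariate real polynomial with respect to the degree `d`,
as a binary form (an element of `ℝ[x,y]`, homogeneous of degree `d` when `P.natDegree ≤ d`):
`H^d(P)(x,y) = ∑_{k=0}^d c_k x^k y^(d-k)`. -/
def homog (d : ℕ) (P : Polynomial ℝ) : MvPolynomial (Fin 2) ℝ :=
  ∑ k ∈ Finset.range (d + 1),
    MvPolynomial.C (P.coeff k) * MvPolynomial.X 0 ^ k * MvPolynomial.X 1 ^ (d - k)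

/-- The pull-back `ι_M^{*}` of a binary form `g` along the parametrized line
`ι_M : x ↦ M (x,1)ᵀ`, i.e. the univariate polynomial `g(m₁₁ x + m₁₂, m₂₁ x + m₂₂)`.
For `M = 1` this is the standard pull-back `ι^{*d} g = g(x, 1)`. -/
def pullM (M : Matrix (Fin 2) (Fin 2) ℝ) (g : MvPolynomial (Fin 2) ℝ) : Polynomial ℝ :=
  MvPolynomial.eval₂ Polynomial.C
    ![Polynomial.C (M 0 0) * Polynomial.X + Polynomial.C (M 0 1),
      Polynomial.C (M 1 0) * Polynomial.X + Polynomial.C (M 1 1)] g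

/-- Right composition `R_M g = g ∘ M` of a binary form with a linear map of `ℝ²`. -/
def compM (M : Matrix (Fin 2) (Fin 2) ℝ) (g : MvPolynomial (Fin 2) ℝ) : MvPolynomial (Fin 2) ℝ :=
  MvPolynomial.eval₂ MvPolynomial.C
    (fun i => ∑ j, MvPolynomial.C (M i j) * MvPolynomial.X j) g

/-- The operator `A^{*d} P = ι_A^{*d} (H^d P)`, i.e.
`A^{*d}P(x) = ∑_{k=0}^d c_k (a₁₁x+a₁₂)^k (a₂₁x+a₂₂)^{d-k}` for `P = ∑ c_k x^k`. -/
def AstarU (d : ℕ) (M : Matrix (Fin 2) (Fin 2) ℝ) (P : Polynomial ℝ) : Polynomial ℝ :=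
  pullM M (homog d P)

/-- The Sylvester matrix of `P` and `Q` with respect to the fixed degrees `p` and `q`
(padding with zero coefficients as if `deg P = p` and `deg Q = q`). -/
def sylvester {R : Type*} [CommRing R] (p q : ℕ) (P Q : Polynomial R) :
    Matrix (Fin (p + q)) (Fin (p + q)) R := fun i j =>
  if (i : ℕ) < q then
    (if (i : ℕ) ≤ (j : ℕ) ∧ (j : ℕ) ≤ (i : ℕ) + p then P.coeff (p + (i : ℕ) - (j : ℕ)) else 0)
  else
    (if (i : ℕ) - q ≤ (j : ℕ) ∧ (j : ℕ) ≤ (i : ℕ) then Q.coeff (q + ((i : ℕ) - q) - (j : ℕ)) else 0)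

/-- The resultant `Res^{p,q}(P,Q)` with respect to the fixed degrees `p` and `q`:
the determinant of the corresponding Sylvester matrix. -/
def resFixed {R : Type*} [CommRing R] (p q : ℕ) (P Q : Polynomial R) : R :=
  (sylvester p q P Q).det

/-- The discriminant `Disc^p(P)` of `P` with respect to the fixed degree `p`: the resultant
(with respect to degrees `(p-1, p-1)`) of the pull-backs of the two partial derivatives
`F_x`, `F_y` of the binary form `F = H^p(P)`; these pull-backs are `P'` and `p·P − x·P'`. -/
def discFixed {R : Type*} [CommRing R] (p : ℕ) (P : Polynomial R) : R :=
  (-1) ^ (p * (p - 1) / 2) *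
    resFixed (p - 1) (p - 1) (Polynomial.derivative P)
      (Polynomial.C (p : R) * P - Polynomial.X * Polynomial.derivative P)

/-- Evaluation `E_x` of a polynomial in `x₁,…,x_m;x_n` at `x ∈ ℝ^m` in its first `m`
variables, giving a univariate real polynomial in `x_n`. -/
def evalP {m : ℕ} (P : Polynomial (MvPolynomial (Fin m) ℝ)) (x : Fin m → ℝ) : Polynomial ℝ :=
  P.map (MvPolynomial.eval x : MvPolynomial (Fin m) ℝ →+* ℝ)

/-- The operator `A^{*d}` acting on the last variable of a polynomial in `x₁,…,x_m;x_n`: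
`A^{*d}P(x,x_n) = ∑_{k=0}^d c_k(x) (a₁₁x_n+a₁₂)^k (a₂₁x_n+a₂₂)^{d-k}`. -/
def AstarPoly {m : ℕ} (d : ℕ) (M : Matrix (Fin 2) (Fin 2) ℝ)
    (P : Polynomial (MvPolynomial (Fin m) ℝ)) : Polynomial (MvPolynomial (Fin m) ℝ) :=
  ∑ k ∈ Finset.range (d + 1),
    Polynomial.C (P.coeff k) *
      (Polynomial.C (MvPolynomial.C (M 0 0)) * Polynomial.X
        + Polynomial.C (MvPolynomial.C (M 0 1))) ^ k *
      (Polynomial.C (MvPolynomial.C (M 1 0)) * Polynomial.X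
        + Polynomial.C (MvPolynomial.C (M 1 1))) ^ (d - k)

/-- The order of a (polynomial) function at a point: the smallest `k` such that some
partial derivative of total order `k` does not vanish at the point, i.e. the smallest `k`
with `iteratedFDeriv ℝ k f v ≠ 0`; it is `⊤` if all derivatives vanish. -/
def ordAt {E : Type*} [NormedAddCommGroup E] [NormedSpace ℝ E] (f : E → ℝ) (v : E) : ℕ∞ :=
  sInf {k : ℕ∞ | ∃ n : ℕ, k = n ∧ iteratedFDeriv ℝ n f v ≠ 0}

/-- A function is order-invariant on a set if it has the same order at every point of the set. -/
def OrderInvariantOn {E : Type*} [NormedAddCommGroup E] [NormedSpace ℝ E]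
    (f : E → ℝ) (S : Set E) : Prop :=
  ∀ x ∈ S, ∀ y ∈ S, ordAt f x = ordAt f y

/-- `(v 0 : v 1)` is a projective root of the binary form `g` of multiplicity (exactly) `mult`:
in the factorization of `g`, the linear form vanishing on the line through `v` occurs with
exponent `mult`. -/
def HasProjRootOfMult (g : MvPolynomial (Fin 2) ℝ) (v : Fin 2 → ℝ) (mult : ℕ) : Prop :=
  ∃ h : MvPolynomial (Fin 2) ℝ,
    g = (MvPolynomial.C (v 1) * MvPolynomial.X 0 - MvPolynomial.C (v 0) * MvPolynomial.X 1) ^ mult * h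
      ∧ MvPolynomial.eval v h ≠ 0

/-- The projective zero set `Z_{ℝP¹}(P,S)` of `P` over `S`, with respect to the degree `d`
in the last variable: the set of `(x, (x_n : y))` with `x ∈ S` and `H^d(P)(x,(x_n,y)) = 0`. -/
def ZProj {m : ℕ} (d : ℕ) (P : Polynomial (MvPolynomial (Fin m) ℝ)) (S : Set (Fin m → ℝ)) :
    Set ((Fin m → ℝ) × RP1) :=
  {p | p.1 ∈ S ∧ ∃ (v : Fin 2 → ℝ) (hv : v ≠ 0),
    Projectivization.mk ℝ v hv = p.2 ∧ MvPolynomial.eval v (homog d (evalP P p.1)) = 0}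

/-- `θ` is a (finite) system of real root functions for `P` on `S`: continuous functions with
pairwise disjoint graphs whose union is `Z_ℝ(P,S)`, each of constant positive multiplicity. -/
def IsRealRootFunctions {m : ℕ} (P : Polynomial (MvPolynomial (Fin m) ℝ)) (S : Set (Fin m → ℝ))
    {k : ℕ} (θ : Fin k → (Fin m → ℝ) → ℝ) : Prop :=
  (∀ l, ContinuousOn (θ l) S) ∧
  (∀ x ∈ S, ∀ l l' : Fin k, l ≠ l' → θ l x ≠ θ l' x) ∧
  (∀ x ∈ S, ∀ t : ℝ, (evalP P x).eval t = 0 ↔ ∃ l, θ l x = t) ∧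
  (∀ l : Fin k, ∃ mult : ℕ, 0 < mult ∧ ∀ x ∈ S, (evalP P x).rootMultiplicity (θ l x) = mult)

/-- `P` is delineable on `S`. -/
def Delineable {m : ℕ} (P : Polynomial (MvPolynomial (Fin m) ℝ)) (S : Set (Fin m → ℝ)) : Prop :=
  ∃ (k : ℕ) (θ : Fin k → (Fin m → ℝ) → ℝ), IsRealRootFunctions P S θ

/-- `θ` is a (finite) system of projective root functions for `P` on `S` with respect to the
degree `d` in the last variable: continuous functions into `ℝP¹` with pairwise disjoint graphs
whose union is `Z_{ℝP¹}(P,S)`, each of constant positive multiplicity. -/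
def IsProjRootFunctions {m : ℕ} (d : ℕ) (P : Polynomial (MvPolynomial (Fin m) ℝ))
    (S : Set (Fin m → ℝ)) {k : ℕ} (θ : Fin k → (Fin m → ℝ) → RP1) : Prop :=
  (∀ l, ContinuousOn (θ l) S) ∧
  (∀ x ∈ S, ∀ l l' : Fin k, l ≠ l' → θ l x ≠ θ l' x) ∧
  (∀ x ∈ S, ∀ (v : Fin 2 → ℝ) (hv : v ≠ 0),
    (MvPolynomial.eval v (homog d (evalP P x)) = 0 ↔ ∃ l, θ l x = Projectivization.mk ℝ v hv)) ∧
  (∀ l : Fin k, ∃ mult : ℕ, 0 < mult ∧ ∀ x ∈ S, ∀ (v : Fin 2 → ℝ) (hv : v ≠ 0),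
    θ l x = Projectivization.mk ℝ v hv → HasProjRootOfMult (homog d (evalP P x)) v mult)

/-- `P` is projectively delineable on `S` (with respect to the degree `d` in the last variable). -/
def ProjDelineable {m : ℕ} (d : ℕ) (P : Polynomial (MvPolynomial (Fin m) ℝ))
    (S : Set (Fin m → ℝ)) : Prop :=
  ∃ (k : ℕ) (θ : Fin k → (Fin m → ℝ) → RP1), IsProjRootFunctions d P S θ

/-- `S` is an analytic submanifold of `ℝ^m`: around each of its points, in suitable
real-analytic coordinates, `S` is an open piece of a linear subspace. -/
def IsAnalyticSubmanifold {m : ℕ} (S : Set (Fin m → ℝ)) : Prop :=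
  ∀ s ∈ S, ∃ (U V : Set (Fin m → ℝ)) (φ ψ : (Fin m → ℝ) → (Fin m → ℝ))
      (L : Submodule ℝ (Fin m → ℝ)),
    IsOpen U ∧ IsOpen V ∧ s ∈ U ∧
    AnalyticOnNhd ℝ φ U ∧ AnalyticOnNhd ℝ ψ V ∧
    Set.MapsTo φ U V ∧ Set.MapsTo ψ V U ∧
    Set.EqOn (ψ ∘ φ) id U ∧ Set.EqOn (φ ∘ ψ) id V ∧
    φ '' (U ∩ S) = V ∩ (L : Set (Fin m → ℝ))

end

/-! Since the leading coefficient vanishes on `S`, the point `∞ = (1 : 0)` is a projective root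
over every `x ∈ S`. The loci where the individual projective root functions take the value `∞`
are closed, pairwise disjoint and cover `S`, so by connectedness one root function is
identically `∞` and the others never are. Composing the others with the affine chart
`(x : y) ↦ x / y` gives the real root functions; multiplicities are preserved because
dehomogenizing `H^d(P)` recovers `P` when `deg P ≤ d`. -/

open Polynomial

noncomputable section

namespace RP1

open Projectivization

theorem ofReal_vec_ne_zero (t : ℝ) : (![t, 1] : Fin 2 → ℝ) ≠ 0 :=
  fun h => by simpa using congrFun h 1

theorem infty_vec_ne_zero : (![1, 0] : Fin 2 → ℝ) ≠ 0 :=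
  fun h => by simpa using congrFun h 0

def infty : RP1 := mk ℝ ![1, 0] infty_vec_ne_zero

def ofReal (t : ℝ) : RP1 := mk ℝ ![t, 1] (ofReal_vec_ne_zero t)

/-- The affine chart `(x : y) ↦ x / y` (with junk value `0` at `∞`). -/
def chart : RP1 → ℝ :=
  Projectivization.lift (fun v => v.1 0 / v.1 1) <| by
    rintro ⟨v, hv⟩ ⟨w, -⟩ a rfl
    have ha : a ≠ 0 := by
      rintro rfl
      exact hv (zero_smul ℝ w)
    simp only [Pi.smul_apply, smul_eq_mul]
    exact mul_div_mul_left _ _ ha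

@[simp] theorem chart_mk (v : Fin 2 → ℝ) (hv : v ≠ 0) : chart (mk ℝ v hv) = v 0 / v 1 := rfl

theorem chart_ofReal (t : ℝ) : chart (ofReal t) = t := by
  simp [ofReal]

theorem ofReal_injective : Function.Injective ofReal :=
  Function.LeftInverse.injective chart_ofReal

theorem mk_eq_infty_iff (v : Fin 2 → ℝ) (hv : v ≠ 0) : mk ℝ v hv = infty ↔ v 1 = 0 := by
  rw [infty, mk_eq_mk_iff']
  constructor
  · rintro ⟨a, rfl⟩
    simp
  · intro h1
    refine ⟨v 0, funext fun i => ?_⟩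
    fin_cases i <;> simp [h1]

theorem ofReal_ne_infty (t : ℝ) : ofReal t ≠ infty := by
  simp [ofReal, mk_eq_infty_iff]

theorem ofReal_chart {p : RP1} (hp : p ≠ infty) : ofReal (chart p) = p := by
  induction p using Projectivization.ind with
  | h v hv =>
    rw [Ne, mk_eq_infty_iff] at hp
    rw [chart_mk, ofReal, mk_eq_mk_iff']
    refine ⟨(v 1)⁻¹, funext fun i => ?_⟩
    fin_cases i <;> simp [div_eq_inv_mul, hp]

theorem isQuotientMap_mk :
    Topology.IsQuotientMap fun v : {v : Fin 2 → ℝ // v ≠ 0} => mk ℝ v.1 v.2 :=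
  isQuotientMap_quotient_mk'

theorem isClosed_singleton_infty : IsClosed {infty} := by
  rw [← isQuotientMap_mk.isClosed_preimage]
  have : (fun v : {v : Fin 2 → ℝ // v ≠ 0} => mk ℝ v.1 v.2) ⁻¹' {infty} = {v | v.1 1 = 0} := by
    ext v
    exact mk_eq_infty_iff v.1 v.2
  rw [this]
  exact isClosed_eq ((continuous_apply 1).comp continuous_subtype_val) continuous_const

theorem continuousOn_chart : ContinuousOn chart {infty}ᶜ := by
  rw [isQuotientMap_mk.continuousOn_isOpen_iff isClosed_singleton_infty.isOpen_compl]
  refine ContinuousOn.div ((continuous_apply 0).comp continuous_subtype_val).continuousOn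
    ((continuous_apply 1).comp continuous_subtype_val).continuousOn fun v hv => ?_
  simpa [mk_eq_infty_iff] using hv

end RP1

theorem homog_eval_infty (d : ℕ) (Q : ℝ[X]) :
    MvPolynomial.eval ![1, 0] (homog d Q) = Q.coeff d := by
  rw [homog, map_sum, Finset.sum_eq_single_of_mem d (Finset.self_mem_range_succ d)]
  · simp
  · intro k hk hkd
    have hpos : d - k ≠ 0 := by
      have := Finset.mem_range_succ_iff.mp hk
      omega
    simp [zero_pow hpos]

theorem homog_eval_ofReal {d : ℕ} {Q : ℝ[X]} (hQ : Q.natDegree ≤ d) (t : ℝ) :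
    MvPolynomial.eval ![t, 1] (homog d Q) = Q.eval t := by
  rw [homog, map_sum, eval_eq_sum_range' (Nat.lt_succ_of_le hQ)]
  simp

def dehomog : MvPolynomial (Fin 2) ℝ →ₐ[ℝ] ℝ[X] :=
  MvPolynomial.aeval ![X, 1]

theorem dehomog_homog {d : ℕ} {Q : ℝ[X]} (hQ : Q.natDegree ≤ d) : dehomog (homog d Q) = Q := by
  rw [homog, map_sum]
  conv_rhs => rw [as_sum_range' Q (d + 1) (Nat.lt_succ_of_le hQ)]
  simp [dehomog, C_mul_X_pow_eq_monomial]

theorem eval_dehomog (t : ℝ) (g : MvPolynomial (Fin 2) ℝ) :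
    (dehomog g).eval t = MvPolynomial.eval ![t, 1] g := by
  have hpoint : (fun i => aeval t ((![X, 1] : Fin 2 → ℝ[X]) i)) = ![t, 1] := by
    funext i
    fin_cases i <;> simp
  rw [← coe_aeval_eq_eval, dehomog, ← AlgHom.comp_apply, MvPolynomial.comp_aeval, hpoint]
  rfl

theorem rootMultiplicity_eq_of_hasProjRootOfMult {d mult : ℕ} {Q : ℝ[X]} (hQ : Q.natDegree ≤ d)
    {t : ℝ} (hroot : HasProjRootOfMult (homog d Q) ![t, 1] mult) :
    Q.rootMultiplicity t = mult := by
  obtain ⟨g, hfactor, hg⟩ := hroot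
  have hQ_eq : Q = (X - C t) ^ mult * dehomog g := by
    rw [← dehomog_homog hQ, hfactor, map_mul, map_pow]
    simp [dehomog]
  have hg_t : (dehomog g).eval t ≠ 0 := by rwa [eval_dehomog]
  have hg_ne : dehomog g ≠ 0 := fun h => hg_t (by simp [h])
  rw [hQ_eq, mul_comm, rootMultiplicity_mul_X_sub_C_pow hg_ne, rootMultiplicity_eq_zero hg_t,
    zero_add]

end

theorem IsConnected.exists_forall_eq_of_forall_exists {X Y ι : Type*} [TopologicalSpace X]
    [TopologicalSpace Y] [Finite ι] {S : Set X} (hS : IsConnected S) {θ : ι → X → Y}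
    (hθ : ∀ l, ContinuousOn (θ l) S) {y : Y} (hy : IsClosed {y})
    (hdisj : ∀ x ∈ S, ∀ l l', l ≠ l' → θ l x ≠ θ l' x) (hcover : ∀ x ∈ S, ∃ l, θ l x = y) :
    ∃ l, ∀ x ∈ S, θ l x = y := by
  have := isPreconnected_iff_preconnectedSpace.mp hS.isPreconnected
  let A : ι → Set S := fun l => S.domRestrict (θ l) ⁻¹' {y}
  have hA : ∀ l, IsClosed (A l) := fun l =>
    hy.preimage (continuousOn_iff_continuous_domRestrict.mp (hθ l))
  obtain ⟨x₀, hx₀⟩ := hS.nonempty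
  obtain ⟨l₀, hl₀⟩ := hcover x₀ hx₀
  have hcompl : (A l₀)ᶜ = ⋃ (l) (_ : l ≠ l₀), A l := by
    ext ⟨x, hx⟩
    obtain ⟨l, hl⟩ := hcover x hx
    simp only [A, Set.mem_compl_iff, Set.mem_preimage, Set.mem_singleton_iff,
      Set.mem_iUnion, exists_prop]
    constructor
    · exact fun h => ⟨l, fun h' => h (h' ▸ hl), hl⟩
    · rintro ⟨l, hne, hl⟩ hl₀
      exact hdisj x hx l l₀ hne (hl.trans hl₀.symm)
  have hclopen : IsClopen (A l₀) :=
    ⟨hA l₀, by rw [← isClosed_compl_iff, hcompl]; exact isClosed_iUnion_of_finite fun l =>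
      isClosed_iUnion_of_finite fun _ => hA l⟩
  have huniv : A l₀ = Set.univ := hclopen.eq_univ ⟨⟨x₀, hx₀⟩, hl₀⟩
  exact ⟨l₀, fun x hx => show (⟨x, hx⟩ : S) ∈ A l₀ from huniv ▸ Set.mem_univ _⟩

theorem IsProjRootFunctions.isRealRootFunctions {m d k : ℕ} {P : (MvPolynomial (Fin m) ℝ)[X]}
    {S : Set (Fin m → ℝ)} {θ : Fin (k + 1) → (Fin m → ℝ) → RP1}
    (hθ : IsProjRootFunctions d P S θ)
    (hdeg : P.natDegree ≤ d) {l₀ : Fin (k + 1)} (hl₀ : ∀ x ∈ S, θ l₀ x = RP1.infty) :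
    IsRealRootFunctions P S fun i x => RP1.chart (θ (l₀.succAbove i) x) := by
  obtain ⟨hcont, hdisj, hroot, hmult⟩ := hθ
  have hQ : ∀ x, (evalP P x).natDegree ≤ d := fun x => natDegree_map_le.trans hdeg
  have hfinite : ∀ x ∈ S, ∀ i, θ (l₀.succAbove i) x ≠ RP1.infty := fun x hx i h =>
    hdisj x hx _ _ (l₀.succAbove_ne i) (h.trans (hl₀ x hx).symm)
  have hofReal : ∀ x ∈ S, ∀ i,
      RP1.ofReal (RP1.chart (θ (l₀.succAbove i) x)) = θ (l₀.succAbove i) x :=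
    fun x hx i => RP1.ofReal_chart (hfinite x hx i)
  refine ⟨fun i => RP1.continuousOn_chart.comp (hcont _) fun x hx => hfinite x hx i, ?_, ?_, ?_⟩
  · intro x hx i i' hne h
    refine hdisj x hx _ _ ((Fin.succAbove_right_injective (p := l₀)).ne hne) ?_
    rw [← hofReal x hx i, ← hofReal x hx i']
    exact congrArg RP1.ofReal h
  · intro x hx t
    rw [← homog_eval_ofReal (hQ x), hroot x hx _ (RP1.ofReal_vec_ne_zero t)]
    constructor
    · rintro ⟨l, hl⟩
      have hne : l ≠ l₀ := by
        rintro rfl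
        exact RP1.ofReal_ne_infty t (hl.symm.trans (hl₀ x hx))
      obtain ⟨i, rfl⟩ := Fin.exists_succAbove_eq hne
      exact ⟨i, RP1.ofReal_injective ((hofReal x hx i).trans hl)⟩
    · rintro ⟨i, rfl⟩
      exact ⟨_, (hofReal x hx i).symm⟩
  · intro i
    obtain ⟨mult, hpos, hm⟩ := hmult (l₀.succAbove i)
    exact ⟨mult, hpos, fun x hx =>
      rootMultiplicity_eq_of_hasProjRootOfMult (hQ x) (hm x hx _ _ (hofReal x hx i).symm)⟩

/-- Let `S ⊆ ℝ^m` be connected and `P` of degree `d_n` in `x_n` with leading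
coefficient `c_{d_n}`. If `c_{d_n}` vanishes identically on `S` and `P` is projectively
delineable on `S`, then `P` is delineable on `S`. -/
theorem delineable_of_projDelineable_of_lc_eq_zero (m dn : ℕ)
    (P : Polynomial (MvPolynomial (Fin m) ℝ)) (hdeg : P.natDegree = dn)
    (S : Set (Fin m → ℝ)) (hS : IsConnected S)
    (hc : ∀ x ∈ S, MvPolynomial.eval x (P.coeff dn) = 0)
    (hdel : ProjDelineable dn P S) :
    Delineable P S := by
  obtain ⟨k, θ, hθ⟩ := hdel
  have hinfty : ∀ x ∈ S, ∃ l, θ l x = RP1.infty := fun x hx =>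
    (hθ.2.2.1 x hx _ RP1.infty_vec_ne_zero).mp <| by
      rw [homog_eval_infty, evalP, coeff_map]
      exact hc x hx
  obtain ⟨l₀, hl₀⟩ :=
    hS.exists_forall_eq_of_forall_exists hθ.1 RP1.isClosed_singleton_infty hθ.2.1 hinfty
  cases k with
  | zero => exact l₀.elim0
  | succ k => exact ⟨k, _, hθ.isRealRootFunctions hdeg.le hl₀⟩
end

section
/- There exist a connected analytic submanifold S of ℝ² and a polynomial P ∈ ℝ[x₁,x₂;x₃] of degree 4 in x₃ such that: (1) P never nullifies on S; (2) the discriminant Disc^4_{x₃}(P) is not the zero polynomial of ℝ[x₁,x₂] and is order-invariant on S; and (3) P is not projectively delineable over S. -/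
/-!
Take `S = ℝ² ∖ {0}` and `P(x; x₃) = Im((x₃ + i)⁴ (x₁ - i x₂))`, so that
`H⁴(P)(x; (u, w)) = Im((u + i w)⁴ (x₁ - i x₂))`. Its discriminant is `2¹⁸ (x₁² + x₂²)³`, which
does not vanish on `S`, so it has order `0` everywhere on `S`. Above `x = (cos 4t, sin 4t)` the
point `(cos t : sin t)` is a projective root. On the parameter line, a continuous root function
that carries this root at one time carries it at all times, because the finitely many graphs
are closed and pairwise disjoint. But after one turn around the origin, at `t = π/2`, the root
has moved from `(1 : 0)` to `(0 : 1)`.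
-/

open Polynomial

lemma sq_add_sq_pos_of_ne_zero {v : Fin 2 → ℝ} (hv : v ≠ 0) : 0 < v 0 ^ 2 + v 1 ^ 2 := by
  have : v 0 ≠ 0 ∨ v 1 ≠ 0 := by
    contrapose! hv
    ext i; fin_cases i <;> simp [hv]
  rcases this with h | h <;> positivity

lemma Projectivization.mk_eq_mk_iff_cross_eq_zero {v w : Fin 2 → ℝ} (hv : v ≠ 0) (hw : w ≠ 0) :
    mk ℝ v hv = mk ℝ w hw ↔ v 0 * w 1 - v 1 * w 0 = 0 := by
  rw [mk_eq_mk_iff']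
  constructor
  · rintro ⟨t, rfl⟩
    simp only [Pi.smul_apply, smul_eq_mul]
    ring
  · intro h
    by_cases hw0 : w 0 = 0
    · have hw1 : w 1 ≠ 0 := fun hw1 => hw (by ext i; fin_cases i <;> simp [hw0, hw1])
      have hv0 : v 0 = 0 := by simpa [hw0, hw1] using h
      refine ⟨v 1 / w 1, funext (Fin.forall_fin_two.mpr ⟨?_, ?_⟩)⟩ <;> simp [hw0, hv0, hw1]
    · refine ⟨v 0 / w 0, funext (Fin.forall_fin_two.mpr ⟨?_, ?_⟩)⟩
      · simp [hw0]
      · simp only [Pi.smul_apply, smul_eq_mul]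
        field_simp
        linear_combination h

/-- A continuous function on `ℝP¹` vanishing exactly at `(w 0 : w 1)`. -/
noncomputable def RP1.crossSq (w : Fin 2 → ℝ) : RP1 → ℝ :=
  Projectivization.lift
    (fun u => ((u : Fin 2 → ℝ) 0 * w 1 - (u : Fin 2 → ℝ) 1 * w 0) ^ 2
      / ((u : Fin 2 → ℝ) 0 ^ 2 + (u : Fin 2 → ℝ) 1 ^ 2))
    (by
      rintro ⟨u, hu⟩ ⟨v, hv⟩ t rfl
      have ht : t ≠ 0 := by rintro rfl; simp at hu
      have := sq_add_sq_pos_of_ne_zero hv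
      simp only [Pi.smul_apply, smul_eq_mul]
      field_simp)

lemma RP1.crossSq_mk (w v : Fin 2 → ℝ) (hv : v ≠ 0) :
    RP1.crossSq w (Projectivization.mk ℝ v hv)
      = (v 0 * w 1 - v 1 * w 0) ^ 2 / (v 0 ^ 2 + v 1 ^ 2) := rfl

lemma RP1.continuous_crossSq (w : Fin 2 → ℝ) : Continuous (RP1.crossSq w) := by
  apply continuous_quot_lift
  have h0 : Continuous fun u : {v : Fin 2 → ℝ // v ≠ 0} => (u : Fin 2 → ℝ) 0 :=
    (continuous_apply 0).comp continuous_subtype_val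
  have h1 : Continuous fun u : {v : Fin 2 → ℝ // v ≠ 0} => (u : Fin 2 → ℝ) 1 :=
    (continuous_apply 1).comp continuous_subtype_val
  exact (((h0.mul continuous_const).sub (h1.mul continuous_const)).pow 2).div
    ((h0.pow 2).add (h1.pow 2)) fun u => (sq_add_sq_pos_of_ne_zero u.2).ne'

instance : T2Space RP1 where
  t2 p q hpq := by
    induction p using Projectivization.ind with | h v hv => ?_
    induction q using Projectivization.ind with | h w hw => ?_
    apply separated_by_continuous (RP1.continuous_crossSq w)
    have hcross : v 0 * w 1 - v 1 * w 0 ≠ 0 :=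
      fun h => hpq ((Projectivization.mk_eq_mk_iff_cross_eq_zero hv hw).mpr h)
    rw [RP1.crossSq_mk, RP1.crossSq_mk, mul_comm (w 0), sub_self, zero_pow two_ne_zero,
      zero_div]
    exact div_ne_zero (pow_ne_zero 2 hcross) (sq_add_sq_pos_of_ne_zero hv).ne'

lemma RP1.continuous_mk {X : Type*} [TopologicalSpace X] {f : X → Fin 2 → ℝ}
    (hf : Continuous f) (hf0 : ∀ x, f x ≠ 0) :
    Continuous fun x => Projectivization.mk ℝ (f x) (hf0 x) :=
  continuous_quot_mk.comp (hf.subtype_mk hf0)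

lemma exists_forall_eq_of_existsUnique {X Y ι : Type*} [TopologicalSpace X] [PreconnectedSpace X]
    [TopologicalSpace Y] [T2Space Y] [Finite ι] {f : ι → X → Y} {g : X → Y}
    (hf : ∀ i, Continuous (f i)) (hg : Continuous g) (huniq : ∀ x, ∃! i, f i x = g x) (x₀ : X) :
    ∃ i, ∀ x, f i x = g x := by
  obtain ⟨i, hi, -⟩ := huniq x₀
  refine ⟨i, fun x => ?_⟩
  have hclosed (j : ι) : IsClosed {x | f j x = g x} := isClosed_eq (hf j) hg
  have hcompl : {x | f i x = g x}ᶜ = ⋃ j ∈ {j | j ≠ i}, {x | f j x = g x} := by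
    ext x
    obtain ⟨j, hj, hj_uniq⟩ := huniq x
    simp only [Set.mem_compl_iff, Set.mem_ofPred_eq, Set.mem_iUnion, exists_prop]
    constructor
    · intro hx
      exact ⟨j, fun hji => hx (hji ▸ hj), hj⟩
    · rintro ⟨k, hki, hk⟩ hx
      exact hki ((hj_uniq k hk).trans (hj_uniq i hx).symm)
  have hopen : IsOpen {x | f i x = g x} := by
    rw [← isClosed_compl_iff, hcompl]
    exact (Set.toFinite _).isClosed_biUnion fun j _ => hclosed j
  exact Set.eq_univ_iff_forall.mp (IsClopen.eq_univ ⟨hclosed i, hopen⟩ ⟨x₀, hi⟩) x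

lemma not_projDelineable_of_monodromy {m d : ℕ} {P : Polynomial (MvPolynomial (Fin m) ℝ)}
    {S : Set (Fin m → ℝ)} {γ : ℝ → Fin m → ℝ} {v : ℝ → Fin 2 → ℝ}
    (hγ : Continuous γ) (hγS : ∀ t, γ t ∈ S) (hv : Continuous v) (hv0 : ∀ t, v t ≠ 0)
    (hroot : ∀ t, MvPolynomial.eval (v t) (homog d (evalP P (γ t))) = 0)
    {t₀ t₁ : ℝ} (hγ₀₁ : γ t₀ = γ t₁)
    (hv₀₁ : Projectivization.mk ℝ (v t₀) (hv0 t₀) ≠ Projectivization.mk ℝ (v t₁) (hv0 t₁)) :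
    ¬ ProjDelineable d P S := by
  rintro ⟨k, θ, hcont, hdisj, hzero, -⟩
  have huniq (t : ℝ) : ∃! l, θ l (γ t) = Projectivization.mk ℝ (v t) (hv0 t) := by
    obtain ⟨l, hl⟩ := (hzero (γ t) (hγS t) (v t) (hv0 t)).mp (hroot t)
    exact ⟨l, hl, fun l' hl' => by_contra fun hne => hdisj _ (hγS t) l' l hne (hl'.trans hl.symm)⟩
  obtain ⟨l, hl⟩ := exists_forall_eq_of_existsUnique (fun l => (hcont l).comp_continuous hγ hγS)
    (RP1.continuous_mk hv hv0) huniq 0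
  have hl₁ : θ l (γ t₁) = _ := hl t₁
  rw [← hγ₀₁] at hl₁
  exact hv₀₁ ((hl t₀).symm.trans hl₁)

lemma ordAt_eq_zero_of_ne_zero {E : Type*} [NormedAddCommGroup E] [NormedSpace ℝ E]
    {f : E → ℝ} {v : E} (h : f v ≠ 0) : ordAt f v = 0 := by
  refine le_antisymm (sInf_le ⟨0, rfl, fun h0 => h ?_⟩) bot_le
  simpa using congrArg (fun g => g ![]) h0

lemma orderInvariantOn_of_forall_ne_zero {E : Type*} [NormedAddCommGroup E] [NormedSpace ℝ E]
    {f : E → ℝ} {S : Set E} (h : ∀ x ∈ S, f x ≠ 0) : OrderInvariantOn f S :=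
  fun x hx y hy => by rw [ordAt_eq_zero_of_ne_zero (h x hx), ordAt_eq_zero_of_ne_zero (h y hy)]

lemma IsOpen.isAnalyticSubmanifold {m : ℕ} {S : Set (Fin m → ℝ)} (hS : IsOpen S) :
    IsAnalyticSubmanifold S := fun s hs =>
  ⟨S, S, id, id, ⊤, hS, hS, hs, analyticOnNhd_id, analyticOnNhd_id, Set.mapsTo_id S,
    Set.mapsTo_id S, fun _ _ => rfl, fun _ _ => rfl, by simp⟩

lemma sylvester_map {R R' : Type*} [CommRing R] [CommRing R'] (φ : R →+* R') (p q : ℕ)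
    (P Q : R[X]) : (sylvester p q P Q).map φ = sylvester p q (P.map φ) (Q.map φ) := by
  ext i j
  simp only [_root_.sylvester, Matrix.map_apply, coeff_map, apply_ite φ, map_zero]

lemma discFixed_map {R R' : Type*} [CommRing R] [CommRing R'] (φ : R →+* R') (p : ℕ)
    (P : R[X]) : φ (discFixed p P) = discFixed p (P.map φ) := by
  simp only [discFixed, resFixed, map_mul, map_pow, map_neg, map_one, RingHom.map_det,
    RingHom.mapMatrix_apply, sylvester_map, derivative_map, Polynomial.map_sub,
    Polynomial.map_mul, Polynomial.map_natCast, Polynomial.map_X, map_natCast]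

lemma eval_homog (d : ℕ) (P : ℝ[X]) (w : Fin 2 → ℝ) :
    MvPolynomial.eval w (homog d P)
      = ∑ k ∈ Finset.range (d + 1), P.coeff k * w 0 ^ k * w 1 ^ (d - k) := by
  simp [homog]

lemma sylvester_three_three {R : Type*} [CommRing R] (P Q : R[X]) :
    sylvester 3 3 P Q =
      !![P.coeff 3, P.coeff 2, P.coeff 1, P.coeff 0, 0, 0;
         0, P.coeff 3, P.coeff 2, P.coeff 1, P.coeff 0, 0;
         0, 0, P.coeff 3, P.coeff 2, P.coeff 1, P.coeff 0;
         Q.coeff 3, Q.coeff 2, Q.coeff 1, Q.coeff 0, 0, 0;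
         0, Q.coeff 3, Q.coeff 2, Q.coeff 1, Q.coeff 0, 0;
         0, 0, Q.coeff 3, Q.coeff 2, Q.coeff 1, Q.coeff 0] := by
  ext i j
  fin_cases i <;> fin_cases j <;> rfl

lemma discFixed_four {R : Type*} [CommRing R] (P : R[X]) :
    discFixed 4 P =
      !![P.coeff 4 * 4, P.coeff 3 * 3, P.coeff 2 * 2, P.coeff 1, 0, 0;
         0, P.coeff 4 * 4, P.coeff 3 * 3, P.coeff 2 * 2, P.coeff 1, 0;
         0, 0, P.coeff 4 * 4, P.coeff 3 * 3, P.coeff 2 * 2, P.coeff 1;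
         P.coeff 3, P.coeff 2 * 2, P.coeff 1 * 3, P.coeff 0 * 4, 0, 0;
         0, P.coeff 3, P.coeff 2 * 2, P.coeff 1 * 3, P.coeff 0 * 4, 0;
         0, 0, P.coeff 3, P.coeff 2 * 2, P.coeff 1 * 3, P.coeff 0 * 4].det := by
  have hQ (n : ℕ) :
      (C ((4 : ℕ) : R) * P - X * derivative P).coeff n = P.coeff n * (4 - n) := by
    cases n with
    | zero => simp [mul_comm]
    | succ n => simp [coeff_derivative]; ring
  rw [discFixed, resFixed, show 4 - 1 = 3 from rfl, sylvester_three_three]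
  simp only [hQ, coeff_derivative]
  norm_num

lemma Real.cos_four_mul_eq (t : ℝ) :
    Real.cos (4 * t) = Real.cos t ^ 4 - 6 * Real.cos t ^ 2 * Real.sin t ^ 2 + Real.sin t ^ 4 := by
  rw [show 4 * t = 2 * (2 * t) by ring, Real.cos_two_mul, Real.cos_two_mul]
  linear_combination (7 * Real.cos t ^ 2 - Real.sin t ^ 2 - 1) * Real.sin_sq_add_cos_sq t

lemma Real.sin_four_mul_eq (t : ℝ) :
    Real.sin (4 * t) = 4 * Real.cos t ^ 3 * Real.sin t - 4 * Real.cos t * Real.sin t ^ 3 := by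
  rw [show 4 * t = 2 * (2 * t) by ring, Real.sin_two_mul, Real.sin_two_mul, Real.cos_two_mul]
  linear_combination (4 * Real.sin t * Real.cos t) * Real.sin_sq_add_cos_sq t

/-- `P(x; x₃) = Im((x₃ + i)⁴ (x₁ - i x₂))`. -/
noncomputable def quarticPoly : Polynomial (MvPolynomial (Fin 2) ℝ) :=
  C (-MvPolynomial.X 1) * X ^ 4 + C (4 * MvPolynomial.X 0) * X ^ 3
    + C (6 * MvPolynomial.X 1) * X ^ 2 + C (-(4 * MvPolynomial.X 0)) * X + C (-MvPolynomial.X 1)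

noncomputable def quarticPolyAt (a b : ℝ) : ℝ[X] :=
  C (-b) * X ^ 4 + C (4 * a) * X ^ 3 + C (6 * b) * X ^ 2 + C (-(4 * a)) * X + C (-b)

lemma natDegree_quarticPoly : quarticPoly.natDegree = 4 := by
  unfold quarticPoly
  compute_degree!

lemma evalP_quarticPoly (x : Fin 2 → ℝ) : evalP quarticPoly x = quarticPolyAt (x 0) (x 1) := by
  simp [evalP, quarticPoly, quarticPolyAt]

lemma coeff_quarticPolyAt (a b : ℝ) :
    (quarticPolyAt a b).coeff 0 = -b ∧ (quarticPolyAt a b).coeff 1 = -(4 * a) ∧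
      (quarticPolyAt a b).coeff 2 = 6 * b ∧ (quarticPolyAt a b).coeff 3 = 4 * a ∧
      (quarticPolyAt a b).coeff 4 = -b := by
  simp only [quarticPolyAt, coeff_add, coeff_C_mul, coeff_X_pow, coeff_X, coeff_C]
  norm_num

lemma evalP_quarticPoly_ne_zero {x : Fin 2 → ℝ} (hx : x ≠ 0) : evalP quarticPoly x ≠ 0 := by
  obtain ⟨-, -, -, h3, h4⟩ := coeff_quarticPolyAt (x 0) (x 1)
  rw [evalP_quarticPoly]
  intro h
  rw [h, coeff_zero] at h3 h4
  exact hx (funext (Fin.forall_fin_two.mpr ⟨by simp; linarith, by simp; linarith⟩))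

lemma eval_homog_quarticPolyAt (a b : ℝ) (w : Fin 2 → ℝ) :
    MvPolynomial.eval w (homog 4 (quarticPolyAt a b))
      = a * (4 * w 0 ^ 3 * w 1 - 4 * w 0 * w 1 ^ 3)
        - b * (w 0 ^ 4 - 6 * w 0 ^ 2 * w 1 ^ 2 + w 1 ^ 4) := by
  obtain ⟨h0, h1, h2, h3, h4⟩ := coeff_quarticPolyAt a b
  simp only [eval_homog, Finset.sum_range_succ, Finset.sum_range_zero, h0, h1, h2, h3, h4]
  ring

lemma eval_homog_quarticPoly_cos_sin (t : ℝ) :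
    MvPolynomial.eval ![Real.cos t, Real.sin t]
      (homog 4 (evalP quarticPoly ![Real.cos (4 * t), Real.sin (4 * t)])) = 0 := by
  simp only [evalP_quarticPoly, eval_homog_quarticPolyAt, Matrix.cons_val_zero,
    Matrix.cons_val_one, Real.cos_four_mul_eq, Real.sin_four_mul_eq]
  ring

lemma discFixed_quarticPolyAt (a b : ℝ) :
    discFixed 4 (quarticPolyAt a b) = 262144 * (a ^ 2 + b ^ 2) ^ 3 := by
  obtain ⟨h0, h1, h2, h3, h4⟩ := coeff_quarticPolyAt a b
  rw [discFixed_four, h0, h1, h2, h3, h4]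
  simp [Matrix.det_succ_row_zero, Fin.sum_univ_succ, Fin.succAbove]
  ring

lemma eval_discFixed_quarticPoly (x : Fin 2 → ℝ) :
    MvPolynomial.eval x (discFixed 4 quarticPoly) = 262144 * (x 0 ^ 2 + x 1 ^ 2) ^ 3 := by
  rw [discFixed_map, ← evalP, evalP_quarticPoly, discFixed_quarticPolyAt]

/-- There exist a connected analytic submanifold `S` of `ℝ²` and a
polynomial `P` in `x₁,x₂;x₃` of degree `4` in `x₃` such that: `P` never nullifies on `S`;
`Disc^4_{x₃}(P)` is not the zero polynomial and is order-invariant on `S`; and `P` is not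
projectively delineable over `S`. -/
theorem exists_counterexample_global_projective_delineability :
    ∃ (S : Set (Fin 2 → ℝ)) (P : Polynomial (MvPolynomial (Fin 2) ℝ)),
      IsAnalyticSubmanifold S ∧ IsConnected S ∧
      P.natDegree = 4 ∧
      (∀ x ∈ S, evalP P x ≠ 0) ∧
      discFixed 4 P ≠ 0 ∧
      OrderInvariantOn (fun x => MvPolynomial.eval x (discFixed 4 P)) S ∧
      ¬ ProjDelineable 4 P S := by
  have hdisc {x : Fin 2 → ℝ} (hx : x ≠ 0) : MvPolynomial.eval x (discFixed 4 quarticPoly) ≠ 0 := by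
    rw [eval_discFixed_quarticPoly]
    exact mul_ne_zero (by norm_num) (pow_pos (sq_add_sq_pos_of_ne_zero hx) 3).ne'
  have hunit (t : ℝ) : ![Real.cos t, Real.sin t] ≠ 0 := fun h => by
    have := Real.cos_sq_add_sin_sq t
    rw [show Real.cos t = 0 from congrFun h 0, show Real.sin t = 0 from congrFun h 1] at this
    norm_num at this
  refine ⟨{0}ᶜ, quarticPoly, isOpen_compl_singleton.isAnalyticSubmanifold,
    isConnected_compl_singleton_of_one_lt_rank (by simp) 0, natDegree_quarticPoly,
    fun x hx => evalP_quarticPoly_ne_zero hx, fun h => hdisc (x := ![1, 0]) (by simp) (by simp [h]),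
    orderInvariantOn_of_forall_ne_zero fun x hx => hdisc hx, ?_⟩
  refine not_projDelineable_of_monodromy (γ := fun t => ![Real.cos (4 * t), Real.sin (4 * t)])
    (v := fun t => ![Real.cos t, Real.sin t]) (by fun_prop) (fun t => hunit (4 * t)) (by fun_prop)
    hunit eval_homog_quarticPoly_cos_sin (t₀ := 0) (t₁ := Real.pi / 2) ?_ ?_
  · simp [show 4 * (Real.pi / 2) = 2 * Real.pi by ring]
  · simp [Projectivization.mk_eq_mk_iff_cross_eq_zero]
end
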